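/- For every n ≥ 1, the graph T_1(n) has a hamiltonian 2-factor and a 2-factor with exactly two cycles; hence T_1(n) is not pseudo 2-factor isomorphic. -/

import Mathlib

/-
Lay the vertices of `T₁(n)` out on a cycle of length `20n`: the `i`-th segment occupies the
positions `20i, …, 20i + 19`, listed along a hamiltonian path of `G_T` from `u¹` to `v¹`.
Consecutive positions are adjacent in `T₁(n)`, since the last vertex `v¹` of a segment is linked
to the first vertex `u¹` of the next one and `v¹_n` to `u¹_1`; pulling back the cycle graph
gives a hamiltonian 2-factor. In the same way `G_T` is covered by two disjoint paths `u¹ → v¹`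
and `u² → v²` of ten vertices each, and these chain up to two disjoint cycles of length `10n`.
One cycle and two cycles have different parities.
-/

open SimpleGraph

/-- A 2-factor of `G`: a spanning subgraph in which every vertex has degree exactly 2. -/
def SimpleGraph.IsTwoFactor {V : Type*} (G F : SimpleGraph V) : Prop :=
  F ≤ G ∧ ∀ v : V, (F.neighborSet v).ncard = 2

/-- The number of cycles of a 2-factor, i.e. its number of connected components. -/
noncomputable def SimpleGraph.numCycles {V : Type*} (F : SimpleGraph V) : ℕ :=
  Nat.card F.ConnectedComponent

/-- A graph is pseudo 2-factor isomorphic if all its 2-factors have the same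
parity of number of cycles. -/
def SimpleGraph.PseudoTwoFactorIsomorphic {V : Type*} (G : SimpleGraph V) : Prop :=
  ∀ F₁ F₂ : SimpleGraph V, G.IsTwoFactor F₁ → G.IsTwoFactor F₂ →
    F₁.numCycles % 2 = F₂.numCycles % 2

/-- Vertices of one segment `G_T` (20 vertices): `Sum.inl (a, j)` with
`a = 0,1,2,3,4,5` standing for `u^{j+1}, w^{j+1}, x^{j+1}, y^{j+1}, z^{j+1}, v^{j+1}`
(`j : Fin 3`), and `Sum.inr 0 = t¹`, `Sum.inr 1 = t²`. -/
abbrev SegV : Type := Fin 6 × Fin 3 ⊕ Fin 2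

/-- Adjacency inside the segment graph `G_T` (Boben's construction):
`u^j ∼ w^k` and `y^j ∼ z^k` for the pairs with `j + k ≠ 2` (0-indexed),
`w^j ∼ x^j`, `x^j ∼ y^j`, `z^j ∼ v^j`, `x^j ∼ t¹`, `v^j ∼ t²`. -/
def segAdj : SegV → SegV → Prop
  | Sum.inl (a, j), Sum.inl (b, k) =>
      (a = 0 ∧ b = 1 ∧ (j : ℕ) + (k : ℕ) ≠ 2) ∨
      (a = 1 ∧ b = 2 ∧ j = k) ∨
      (a = 2 ∧ b = 3 ∧ j = k) ∨
      (a = 3 ∧ b = 4 ∧ (j : ℕ) + (k : ℕ) ≠ 2) ∨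
      (a = 4 ∧ b = 5 ∧ j = k)
  | Sum.inl (a, _), Sum.inr t => (a = 2 ∧ t = 0) ∨ (a = 5 ∧ t = 1)
  | _, _ => False

/-- `T(n)`: `n` copies of the segment graph `G_T`, consecutive copies linked by the
edges `v_{i-1}^j u_i^j`, `j = 1,2,3`. -/
def Tgraph (n : ℕ) : SimpleGraph (Fin n × SegV) :=
  SimpleGraph.fromRel fun p q =>
    (p.1 = q.1 ∧ segAdj p.2 q.2) ∨
    ((p.1 : ℕ) + 1 = (q.1 : ℕ) ∧ ∃ j : Fin 3, p.2 = Sum.inl (5, j) ∧ q.2 = Sum.inl (0, j))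

/-- `T₁(n)`: `T(n)` plus the edges `u₁^j v_n^j`, `j = 1,2,3`. -/
def T1 (n : ℕ) : SimpleGraph (Fin n × SegV) :=
  SimpleGraph.fromRel fun p q =>
    (Tgraph n).Adj p q ∨
    ((p.1 : ℕ) = 0 ∧ (q.1 : ℕ) = n - 1 ∧
      ∃ j : Fin 3, p.2 = Sum.inl (0, j) ∧ q.2 = Sum.inl (5, j))

namespace SimpleGraph

variable {V W : Type*}

theorem isTwoFactor_comap_equiv {G : SimpleGraph V} {H : SimpleGraph W} (e : V ≃ W)
    (hH : ∀ w, (H.neighborSet w).ncard = 2)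
    (hHG : ∀ x y, H.Adj x y → G.Adj (e.symm x) (e.symm y)) :
    G.IsTwoFactor (H.comap e) := by
  refine ⟨fun p q h => by simpa using hHG _ _ h, fun v => ?_⟩
  have : (H.comap e).neighborSet v = e ⁻¹' H.neighborSet (e v) := rfl
  rw [this, Set.ncard_preimage_of_injective_subset_range e.injective (by simp), hH]

theorem Iso.numCycles_eq {G : SimpleGraph V} {H : SimpleGraph W} (φ : G ≃g H) :
    G.numCycles = H.numCycles :=
  Nat.card_congr φ.connectedComponentEquiv

theorem Connected.numCycles_eq_one {G : SimpleGraph V} (hG : G.Connected) : G.numCycles = 1 := by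
  have := hG.nonempty
  have := hG.preconnected.subsingleton_connectedComponent
  exact Nat.card_unique

noncomputable def connectedComponentBoxProdBotEquiv {G : SimpleGraph V} (hG : G.Connected) :
    (G □ (⊥ : SimpleGraph W)).ConnectedComponent ≃ W where
  toFun := ConnectedComponent.lift Prod.snd fun _ _ p _ =>
    reachable_bot.mp (reachable_boxProd.mp p.reachable).2
  invFun b := connectedComponentMk _ (hG.nonempty.some, b)
  left_inv := ConnectedComponent.ind fun _ =>
    ConnectedComponent.sound (reachable_boxProd.mpr ⟨hG _ _, Reachable.refl _⟩)
  right_inv _ := rfl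

theorem numCycles_boxProd_bot {G : SimpleGraph V} (hG : G.Connected) :
    (G □ (⊥ : SimpleGraph W)).numCycles = Nat.card W :=
  Nat.card_congr (connectedComponentBoxProdBotEquiv hG)

theorem ncard_neighborSet_boxProd_bot (G : SimpleGraph V) (x : V × W) :
    ((G □ (⊥ : SimpleGraph W)).neighborSet x).ncard = (G.neighborSet x.1).ncard := by
  have : (G □ (⊥ : SimpleGraph W)).neighborSet x = (·, x.2) '' G.neighborSet x.1 := by
    ext ⟨a, b⟩
    simp [eq_comm]
  rw [this, Set.ncard_image_of_injective _ (Prod.mk_left_injective x.2)]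

theorem ncard_neighborSet_cycleGraph {N : ℕ} (hN : 3 ≤ N) (v : Fin N) :
    ((cycleGraph N).neighborSet v).ncard = 2 := by
  obtain ⟨k, rfl⟩ : ∃ k, N = k + 3 := ⟨N - 3, by omega⟩
  rw [← coe_neighborFinset, Set.ncard_coe_finset, card_neighborFinset_eq_degree,
    cycleGraph_degree_three_le]

theorem cycleGraph_connected_of_pos {N : ℕ} (hN : 0 < N) : (cycleGraph N).Connected := by
  obtain ⟨k, rfl⟩ : ∃ k, N = k + 1 := ⟨N - 1, by omega⟩
  exact cycleGraph_connected

theorem succ_mod_of_cycleGraph_adj {N : ℕ} {x y : Fin N} (h : (cycleGraph N).Adj x y) :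
    (x.val + 1) % N = y.val ∨ (y.val + 1) % N = x.val := by
  match N, x, y, h with
  | k + 2, x, y, h =>
    rw [cycleGraph_adj, sub_eq_iff_eq_add, sub_eq_iff_eq_add] at h
    rcases h with rfl | rfl
    · right; rw [Fin.val_add, Fin.val_one, add_comm]
    · left; rw [Fin.val_add, Fin.val_one, add_comm]

end SimpleGraph

theorem Nat.eq_and_eq_of_add_mul_eq_add_mul {k a b c d : ℕ} (ha : a < k) (hc : c < k)
    (h : a + k * b = c + k * d) : a = c ∧ b = d := by
  have hk : 0 < k := by omega
  obtain ⟨hdiv, hmod⟩ := (Nat.div_mod_unique hk).mpr ⟨h, ha⟩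
  obtain ⟨hdiv', hmod'⟩ := (Nat.div_mod_unique hk).mpr ⟨rfl, hc⟩
  exact ⟨hmod.symm.trans hmod', hdiv.symm.trans hdiv'⟩

theorem Nat.add_mul_add_one_mod_cases {n k i i' r r' : ℕ} (hi : i < n) (hr : r < k)
    (hr' : r' < k) (h : (r + k * i + 1) % (n * k) = r' + k * i') :
    (i' = i ∧ r' = r + 1) ∨ (r + 1 = k ∧ i' = i + 1 ∧ r' = 0) ∨
      (r + 1 = k ∧ i + 1 = n ∧ i' = 0 ∧ r' = 0) := by
  have hle : k * i + k ≤ n * k := by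
    rw [mul_comm n, ← mul_add_one]; exact Nat.mul_le_mul_left k hi
  rcases Nat.lt_or_ge (r + 1) k with hr1 | hr1
  · rw [Nat.mod_eq_of_lt (by omega)] at h
    have ⟨hr', hi'⟩ := Nat.eq_and_eq_of_add_mul_eq_add_mul (b := i) (d := i') hr1 hr' (by omega)
    exact Or.inl ⟨hi'.symm, hr'.symm⟩
  have hrk : r + k * i + 1 = 0 + k * (i + 1) := by rw [mul_add_one]; omega
  rcases Nat.lt_or_ge (i + 1) n with hi1 | hi1
  · have hlt : k * (i + 1) + k ≤ n * k := by
      rw [mul_comm n, ← mul_add_one]; exact Nat.mul_le_mul_left k hi1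
    rw [hrk, Nat.mod_eq_of_lt (by omega)] at h
    have ⟨hr', hi'⟩ := Nat.eq_and_eq_of_add_mul_eq_add_mul (by omega) hr' h
    exact Or.inr (Or.inl ⟨by omega, hi'.symm, hr'.symm⟩)
  · have hin : i + 1 = n := by omega
    rw [hrk, hin, zero_add, mul_comm, Nat.mod_self] at h
    have hi' : i' = 0 := (Nat.mul_eq_zero.mp (by omega : k * i' = 0)).resolve_left (by omega)
    exact Or.inr (Or.inr ⟨by omega, hin, hi', by omega⟩)

instance : DecidableRel segAdj := fun s t => by
  rcases s with ⟨a, j⟩ | a <;> rcases t with ⟨b, k⟩ | b <;> unfold segAdj <;> infer_instance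

theorem segAdj_ne : ∀ s t : SegV, segAdj s t → s ≠ t := by decide

section Adjacency

variable {n : ℕ}

theorem Tgraph_le_T1 (n : ℕ) : Tgraph n ≤ T1 n := fun p q h =>
  (fromRel_adj _ p q).mpr ⟨h.ne, Or.inl (Or.inl h)⟩

theorem Tgraph_adj_of_segAdj (i : Fin n) {s t : SegV} (h : segAdj s t) :
    (Tgraph n).Adj (i, s) (i, t) :=
  (fromRel_adj _ _ _).mpr
    ⟨fun hst => segAdj_ne s t h (congrArg Prod.snd hst), Or.inl (Or.inl ⟨rfl, h⟩)⟩

theorem Tgraph_adj_link {i i' : Fin n} (h : (i : ℕ) + 1 = i') (j : Fin 3) :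
    (Tgraph n).Adj (i, Sum.inl (5, j)) (i', Sum.inl (0, j)) :=
  (fromRel_adj _ _ _).mpr ⟨by simp, Or.inl (Or.inr ⟨h, j, rfl, rfl⟩)⟩

theorem T1_adj_wrap {i i' : Fin n} (hi : (i : ℕ) = n - 1) (hi' : (i' : ℕ) = 0) (j : Fin 3) :
    (T1 n).Adj (i, Sum.inl (5, j)) (i', Sum.inl (0, j)) :=
  (fromRel_adj _ _ _).mpr ⟨by simp, Or.inr (Or.inr ⟨hi', hi, j, rfl, rfl⟩)⟩

end Adjacency

def IsSegmentPath {k : ℕ} (P : Fin (k + 1) → SegV) (j : Fin 3) : Prop :=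
  P 0 = Sum.inl (0, j) ∧ P (Fin.last k) = Sum.inl (5, j) ∧
    ∀ r : Fin k, segAdj (P r.castSucc) (P r.succ) ∨ segAdj (P r.succ) (P r.castSucc)

theorem IsSegmentPath.T1_adj {n k : ℕ} {P : Fin (k + 1) → SegV} {j : Fin 3}
    (hP : IsSegmentPath P j) {i i' : Fin n} {r r' : Fin (k + 1)}
    -- `r + (k + 1) * i` is the position of `(i, P r)` in the layout of `finProdFinEquiv`
    (h : ((r : ℕ) + (k + 1) * i + 1) % (n * (k + 1)) = r' + (k + 1) * i') :
    (T1 n).Adj (i, P r) (i', P r') := by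
  obtain ⟨hfirst, hlast, hstep⟩ := hP
  rcases Nat.add_mul_add_one_mod_cases i.isLt r.isLt r'.isLt h with
    ⟨hi, hr⟩ | ⟨hr, hi, hr'⟩ | ⟨hr, hi, hi', hr'⟩
  · obtain rfl : i = i' := (Fin.ext hi).symm
    obtain ⟨r, rfl⟩ : ∃ r₀ : Fin k, r = r₀.castSucc := ⟨⟨r, by omega⟩, rfl⟩
    obtain rfl : r' = r.succ := Fin.ext hr
    rcases hstep r with h | h
    · exact Tgraph_le_T1 n (Tgraph_adj_of_segAdj i h)
    · exact (Tgraph_le_T1 n (Tgraph_adj_of_segAdj i h)).symm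
  · obtain rfl : r = Fin.last k := Fin.ext (by simp; omega)
    obtain rfl : r' = 0 := Fin.ext hr'
    rw [hfirst, hlast]
    exact Tgraph_le_T1 n (Tgraph_adj_link hi.symm j)
  · obtain rfl : r = Fin.last k := Fin.ext (by simp; omega)
    obtain rfl : r' = 0 := Fin.ext hr'
    rw [hfirst, hlast]
    exact T1_adj_wrap (by omega) hi' j

theorem IsSegmentPath.T1_adj_of_cycleGraph_adj {n k : ℕ} {P : Fin (k + 1) → SegV} {j : Fin 3}
    (hP : IsSegmentPath P j) {x y : Fin (n * (k + 1))} (h : (cycleGraph _).Adj x y) :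
    (T1 n).Adj (Prod.map id P (finProdFinEquiv.symm x))
      (Prod.map id P (finProdFinEquiv.symm y)) := by
  obtain ⟨⟨i, r⟩, rfl⟩ := finProdFinEquiv.surjective x
  obtain ⟨⟨i', r'⟩, rfl⟩ := finProdFinEquiv.surjective y
  simp only [Equiv.symm_apply_apply, Prod.map, id]
  rcases succ_mod_of_cycleGraph_adj h with h | h
  · exact hP.T1_adj h
  · exact (hP.T1_adj h).symm

-- `u¹ w² u³ w³ u² w¹ x¹ y¹ z² v² t² v³ z³ y³ x³ t¹ x² y² z¹ v¹`
def hamPath : Fin 20 → SegV :=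
  ![.inl (0, 0), .inl (1, 1), .inl (0, 2), .inl (1, 2), .inl (0, 1), .inl (1, 0), .inl (2, 0),
    .inl (3, 0), .inl (4, 1), .inl (5, 1), .inr 1, .inl (5, 2), .inl (4, 2), .inl (3, 2),
    .inl (2, 2), .inr 0, .inl (2, 1), .inl (3, 1), .inl (4, 0), .inl (5, 0)]

theorem hamPath_bijective : hamPath.Bijective := by decide

theorem isSegmentPath_hamPath : IsSegmentPath hamPath 0 := ⟨rfl, rfl, by decide⟩

-- `u¹ w² u³ w³ x³ t¹ x² y² z¹ v¹` and `u² w¹ x¹ y¹ z² y³ z³ v³ t² v²`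
def twoPaths : Fin 2 → Fin 10 → SegV :=
  ![![.inl (0, 0), .inl (1, 1), .inl (0, 2), .inl (1, 2), .inl (2, 2), .inr 0, .inl (2, 1),
      .inl (3, 1), .inl (4, 0), .inl (5, 0)],
    ![.inl (0, 1), .inl (1, 0), .inl (2, 0), .inl (3, 0), .inl (4, 1), .inl (3, 2), .inl (4, 2),
      .inl (5, 2), .inr 1, .inl (5, 1)]]

theorem twoPaths_bijective : (fun x : Fin 10 × Fin 2 => twoPaths x.2 x.1).Bijective := by
  decide

theorem isSegmentPath_twoPaths (c : Fin 2) : IsSegmentPath (twoPaths c) c.castSucc := by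
  fin_cases c <;> exact ⟨rfl, rfl, by decide⟩

noncomputable def hamEquiv (n : ℕ) : Fin n × SegV ≃ Fin (n * 20) :=
  (Equiv.prodCongr (Equiv.refl _) (Equiv.ofBijective _ hamPath_bijective).symm).trans
    finProdFinEquiv

noncomputable def twoPathsEquiv (n : ℕ) : Fin n × SegV ≃ Fin (n * 10) × Fin 2 :=
  (Equiv.prodCongr (Equiv.refl _) (Equiv.ofBijective _ twoPaths_bijective).symm).trans <|
    (Equiv.prodAssoc _ _ _).symm.trans (Equiv.prodCongr finProdFinEquiv (Equiv.refl _))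

noncomputable def hamiltonianFactor (n : ℕ) : SimpleGraph (Fin n × SegV) :=
  (cycleGraph (n * 20)).comap (hamEquiv n)

noncomputable def twoCycleFactor (n : ℕ) : SimpleGraph (Fin n × SegV) :=
  (cycleGraph (n * 10) □ (⊥ : SimpleGraph (Fin 2))).comap (twoPathsEquiv n)

theorem isTwoFactor_hamiltonianFactor {n : ℕ} (hn : 1 ≤ n) :
    (T1 n).IsTwoFactor (hamiltonianFactor n) :=
  isTwoFactor_comap_equiv _ (ncard_neighborSet_cycleGraph (by omega))
    fun _ _ h => isSegmentPath_hamPath.T1_adj_of_cycleGraph_adj h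

theorem connected_hamiltonianFactor {n : ℕ} (hn : 1 ≤ n) : (hamiltonianFactor n).Connected :=
  (Iso.comap _ _).connected_iff.mpr (cycleGraph_connected_of_pos (by omega))

theorem isTwoFactor_twoCycleFactor {n : ℕ} (hn : 1 ≤ n) :
    (T1 n).IsTwoFactor (twoCycleFactor n) := by
  refine isTwoFactor_comap_equiv _ (fun x => ?_) fun ⟨x, c⟩ ⟨y, c'⟩ h => ?_
  · rw [ncard_neighborSet_boxProd_bot, ncard_neighborSet_cycleGraph (by omega)]
  · obtain ⟨hxy, rfl⟩ : (cycleGraph _).Adj x y ∧ c = c' := by simpa using h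
    exact (isSegmentPath_twoPaths c).T1_adj_of_cycleGraph_adj hxy

theorem numCycles_twoCycleFactor {n : ℕ} (hn : 1 ≤ n) : (twoCycleFactor n).numCycles = 2 := by
  rw [twoCycleFactor, (Iso.comap _ _).numCycles_eq,
    numCycles_boxProd_bot (cycleGraph_connected_of_pos (by omega)), Nat.card_fin]

theorem T1_not_pseudo_two_factor_isomorphic (n : ℕ) (hn : 1 ≤ n) :
    (∃ F : SimpleGraph (Fin n × SegV), (T1 n).IsTwoFactor F ∧ F.Connected) ∧
    (∃ F : SimpleGraph (Fin n × SegV), (T1 n).IsTwoFactor F ∧ F.numCycles = 2) ∧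
    ¬ (T1 n).PseudoTwoFactorIsomorphic := by
  refine ⟨⟨_, isTwoFactor_hamiltonianFactor hn, connected_hamiltonianFactor hn⟩,
    ⟨_, isTwoFactor_twoCycleFactor hn, numCycles_twoCycleFactor hn⟩, fun h => ?_⟩
  have hparity := h _ _ (isTwoFactor_hamiltonianFactor hn) (isTwoFactor_twoCycleFactor hn)
  rw [(connected_hamiltonianFactor hn).numCycles_eq_one, numCycles_twoCycleFactor hn] at hparity
  exact absurd hparity (by decide)
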